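/- Let λ ≠ 0, μ real, η ∈ ℝ² nonzero, η* = θη, and v(u) = (-u/(λ² + (μ-u)²))(λη - (μ-u)η*). Then for every real u, |v(u) + η*|² = ((λ² + μ²)/(λ² + (μ-u)²))·|η|². -/

import Mathlib

noncomputable section
open Real Matrix

def toV (x : Fin 2 → ℝ) : EuclideanSpace ℝ (Fin 2) := WithLp.toLp 2 x

def th : Matrix (Fin 2) (Fin 2) ℝ := !![0, -1; 1, 0]

/-! Writing `v(u) + η* = cλ η + (1 - c(μ - u)) η*` with `c = -u / (λ² + (μ - u)²)`, the claim
follows because `η` and `η* = θη` are orthogonal of the same length, so the squared norm is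
`((cλ)² + (1 - c(μ - u))²) |η|²`, and this coefficient simplifies to `(λ² + μ²) / (λ² + (μ - u)²)`. -/

lemma norm_toV_sq (x : Fin 2 → ℝ) : ‖toV x‖ ^ 2 = x 0 ^ 2 + x 1 ^ 2 := by
  rw [toV, EuclideanSpace.norm_sq_eq, Fin.sum_univ_two, Real.norm_eq_abs, Real.norm_eq_abs,
    sq_abs, sq_abs, WithLp.ofLp_toLp]

lemma th_mulVec (x : Fin 2 → ℝ) : th.mulVec x = ![-x 1, x 0] := by
  ext i
  fin_cases i <;> simp [th, Matrix.mulVec, dotProduct, Fin.sum_univ_two]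

lemma norm_toV_smul_add_smul_th_mulVec_sq (a b : ℝ) (x : Fin 2 → ℝ) :
    ‖toV (a • x + b • th.mulVec x)‖ ^ 2 = (a ^ 2 + b ^ 2) * ‖toV x‖ ^ 2 := by
  simp only [norm_toV_sq, th_mulVec, Pi.add_apply, Pi.smul_apply, smul_eq_mul,
    Matrix.cons_val_zero, Matrix.cons_val_one]
  ring

lemma sq_mul_add_sq_one_sub_mul (lam mu u : ℝ) (hD : lam ^ 2 + (mu - u) ^ 2 ≠ 0) :
    (-u / (lam ^ 2 + (mu - u) ^ 2) * lam) ^ 2 + (1 - -u / (lam ^ 2 + (mu - u) ^ 2) * (mu - u)) ^ 2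
      = (lam ^ 2 + mu ^ 2) / (lam ^ 2 + (mu - u) ^ 2) := by
  field_simp
  ring

theorem stmt7_general (lam mu : ℝ) (hlam : lam ≠ 0) (eta : Fin 2 → ℝ)
    (etaStar : Fin 2 → ℝ) (hetaStar : etaStar = th.mulVec eta)
    (v : ℝ → Fin 2 → ℝ)
    (hv : ∀ u, v u = (-u / (lam ^ 2 + (mu - u) ^ 2)) •
      (lam • eta - (mu - u) • etaStar)) :
    ∀ u : ℝ, ‖toV (v u + etaStar)‖ ^ 2 =
      ((lam ^ 2 + mu ^ 2) / (lam ^ 2 + (mu - u) ^ 2)) * ‖toV eta‖ ^ 2 := by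
  intro u
  set c := -u / (lam ^ 2 + (mu - u) ^ 2) with hc
  have hD : lam ^ 2 + (mu - u) ^ 2 ≠ 0 := by positivity
  have hsum : v u + etaStar = (c * lam) • eta + (1 - c * (mu - u)) • th.mulVec eta := by
    rw [hv, ← hetaStar]
    module
  rw [hsum, norm_toV_smul_add_smul_th_mulVec_sq, hc, sq_mul_add_sq_one_sub_mul lam mu u hD]

/-- For `λ ≠ 0`, `η ≠ 0`, `η* = θη` and
`v(u) = (-u/(λ² + (μ-u)²))(λη - (μ-u)η*)`, one has
`|v(u) + η*|² = ((λ² + μ²)/(λ² + (μ-u)²))|η|²` for every real `u`. -/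
theorem stmt7 (lam mu : ℝ) (hlam : lam ≠ 0) (eta : Fin 2 → ℝ) (heta : eta ≠ 0)
    (etaStar : Fin 2 → ℝ) (hetaStar : etaStar = th.mulVec eta)
    (v : ℝ → Fin 2 → ℝ)
    (hv : ∀ u, v u = (-u / (lam ^ 2 + (mu - u) ^ 2)) •
      (lam • eta - (mu - u) • etaStar)) :
    ∀ u : ℝ, ‖toV (v u + etaStar)‖ ^ 2 =
      ((lam ^ 2 + mu ^ 2) / (lam ^ 2 + (mu - u) ^ 2)) * ‖toV eta‖ ^ 2 :=
  stmt7_general lam mu hlam eta etaStar hetaStar v hv
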